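/- arXiv:2210.17208 — 3 statements merged into one kernel-verified Lean document; each statement's English description precedes it below -/
import Mathlib

section
/- Fix constants A > 0, κ > 0, β ≥ 0 and C > 0, and for an integer M ≥ 2 and (δ¹, …, δ^M) ∈ ℝ^M define λ^i(δ¹, …, δ^M) = A·exp(−(κ+β)·δ^i + (β/M)·Σ_{j=1}^M δ^j). There exists M₀ (depending only on κ, β and C) such that for all M ≥ M₀, every index i, and every (δ¹, …, δ^M) with δ^j ∈ [−C, C] for all j, the double sum Σ_{j=1}^M Σ_{k≠i} ∂λ^j/∂δ^k is strictly negative. -/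
open Real Finset

private lemma deriv_aexp (A a b x : ℝ) :
    deriv (fun t : ℝ => A * Real.exp (a * t + b)) x
      = A * Real.exp (a * x + b) * a := by
  have h : HasDerivAt (fun t : ℝ => a * t + b) a x := by
    simpa using ((hasDerivAt_id x).const_mul a).add_const b
  have h2 := (h.exp.const_mul A)
  simpa [mul_assoc] using h2.deriv

private lemma term_deriv (A κ β : ℝ) (M : ℕ) (j k : Fin M) (δ : Fin M → ℝ) :
    deriv (fun t =>
        A * Real.exp (-(κ + β) * Function.update δ k t j +
          β / M * ∑ l, Function.update δ k t l)) (δ k)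
      = A * Real.exp (-(κ + β) * δ j + β / M * ∑ l, δ l) *
          ((if j = k then -(κ + β) else 0) + β / M) := by
  have hsum' : (∑ l, δ l) = δ k + ∑ l ∈ Finset.univ.erase k, δ l :=
    (Finset.add_sum_erase _ _ (Finset.mem_univ k)).symm
  have hsum : ∀ t : ℝ, ∑ l, Function.update δ k t l
      = t + ∑ l ∈ Finset.univ.erase k, δ l := by
    intro t
    rw [← Finset.add_sum_erase _ _ (Finset.mem_univ k)]
    congr 1
    · simp
    · exact Finset.sum_congr rfl fun l hl =>
        Function.update_of_ne (Finset.ne_of_mem_erase hl) _ _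
  rcases eq_or_ne j k with h | h
  · subst h
    have hf : (fun t => A * Real.exp (-(κ + β) * Function.update δ j t j +
        β / M * ∑ l, Function.update δ j t l))
        = fun t => A * Real.exp ((-(κ + β) + β / M) * t +
            β / M * ∑ l ∈ Finset.univ.erase j, δ l) := by
      funext t
      rw [Function.update_self, hsum]
      ring_nf
    rw [hf, deriv_aexp, if_pos rfl]
    congr 2
    rw [hsum']
    ring
  · have hf : (fun t => A * Real.exp (-(κ + β) * Function.update δ k t j +
        β / M * ∑ l, Function.update δ k t l))
        = fun t => A * Real.exp ((β / M) * t +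
            (-(κ + β) * δ j + β / M * ∑ l ∈ Finset.univ.erase k, δ l)) := by
      funext t
      rw [Function.update_of_ne h, hsum]
      ring_nf
    rw [hf, deriv_aexp, if_neg h]
    congr 2
    · rw [hsum']; ring
    · ring

/-- For sufficiently many agents, if every agent except agent `i` raises
their quotes by the same amount then the total sales across all agents decrease:
there exists `M₀` (depending only on `κ`, `β`, `C`) such that for all `M ≥ M₀`, every
index `i`, and quotes `δ^j ∈ [−C, C]`, the double sum `Σ_{j=1}^M Σ_{k≠i} ∂λ^j/∂δ^k`
is strictly negative, where `λ^j(δ) = A·exp(−(κ+β)·δ^j + (β/M)·Σ_l δ^l)`. -/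
theorem finitePlayer_total_intensity_decreases
    (A κ β C : ℝ) (hA : 0 < A) (hκ : 0 < κ) (hβ : 0 ≤ β) (hC : 0 < C) :
    ∃ M₀ : ℕ, ∀ M : ℕ, M₀ ≤ M → 2 ≤ M →
      ∀ (i : Fin M) (δ : Fin M → ℝ), (∀ j, δ j ∈ Set.Icc (-C) C) →
        ∑ j : Fin M, ∑ k ∈ Finset.univ.erase i,
            deriv (fun t =>
              A * Real.exp (-(κ + β) * Function.update δ k t j +
                β / M * ∑ l, Function.update δ k t l)) (δ k) < 0 := by
  set R := β * Real.exp (2 * (κ + 2 * β) * C) / κ with hR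
  have hRnn : 0 ≤ R := by positivity
  refine ⟨⌈R⌉₊ + 2, ?_⟩
  intro M hM hM2 i δ hδ
  have hMpos : (0:ℝ) < M := by
    have : (2:ℝ) ≤ M := by exact_mod_cast hM2
    linarith
  set S := ∑ l, δ l with hS
  set E : Fin M → ℝ := fun j => A * Real.exp (-(κ + β) * δ j + β / M * S) with hE
  -- rewrite the double sum
  have hrw : (∑ j : Fin M, ∑ k ∈ Finset.univ.erase i,
      deriv (fun t =>
        A * Real.exp (-(κ + β) * Function.update δ k t j +
          β / M * ∑ l, Function.update δ k t l)) (δ k))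
      = ∑ j : Fin M, ∑ k ∈ Finset.univ.erase i,
          E j * ((if j = k then -(κ + β) else 0) + β / M) :=
    Finset.sum_congr rfl fun j _ => Finset.sum_congr rfl fun k _ =>
      term_deriv A κ β M j k δ
  rw [hrw]
  have hcard : (Finset.univ.erase i).card = M - 1 := by
    rw [Finset.card_erase_of_mem (Finset.mem_univ i), Finset.card_univ, Fintype.card_fin]
  have hcardR : ((Finset.univ.erase i).card : ℝ) = (M : ℝ) - 1 := by
    rw [hcard, Nat.cast_sub (by omega : 1 ≤ M), Nat.cast_one]
  have hinner : ∀ j : Fin M, (∑ k ∈ Finset.univ.erase i,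
      E j * ((if j = k then -(κ + β) else 0) + β / M))
      = E j * ((if j ∈ Finset.univ.erase i then -(κ + β) else 0)
          + ((M : ℝ) - 1) * (β / M)) := by
    intro j
    rw [← Finset.mul_sum]
    congr 1
    rw [Finset.sum_add_distrib, Finset.sum_ite_eq, Finset.sum_const, nsmul_eq_mul, hcardR]
  simp only [hinner]
  rw [← Finset.add_sum_erase _ _ (Finset.mem_univ i)]
  have hi : i ∉ Finset.univ.erase i := Finset.notMem_erase i _
  rw [if_neg hi]
  -- bounds
  set L := A * Real.exp ((κ + 2 * β) * C) with hL
  set l := A * Real.exp (-((κ + 2 * β) * C)) with hl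
  have hlpos : 0 < l := by positivity
  have hLpos : 0 < L := by positivity
  have hSub : S ≤ M * C := by
    rw [hS]
    calc (∑ x : Fin M, δ x) ≤ ∑ _x : Fin M, C :=
          Finset.sum_le_sum fun x _ => (hδ x).2
      _ = M * C := by rw [Finset.sum_const, Finset.card_univ, Fintype.card_fin, nsmul_eq_mul]
  have hSlb : -(M * C) ≤ S := by
    rw [hS]
    calc -(M * C) = ∑ _x : Fin M, (-C) := by
          rw [Finset.sum_const, Finset.card_univ, Fintype.card_fin, nsmul_eq_mul]; ring
      _ ≤ ∑ x : Fin M, δ x := Finset.sum_le_sum fun x _ => (hδ x).1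
  have hexp_ub : ∀ j : Fin M, -(κ + β) * δ j + β / M * S ≤ (κ + 2 * β) * C := by
    intro j
    have h1 : -(κ + β) * δ j ≤ (κ + β) * C := by
      nlinarith [(hδ j).1, (hδ j).2]
    have h2 : β / M * S ≤ β * C := by
      have hβM : 0 ≤ β / M := by positivity
      have := mul_le_mul_of_nonneg_left hSub hβM
      calc β / M * S ≤ β / M * (M * C) := this
        _ = β * C := by field_simp
    linarith
  have hexp_lb : ∀ j : Fin M, -((κ + 2 * β) * C) ≤ -(κ + β) * δ j + β / M * S := by
    intro j
    have h1 : -((κ + β) * C) ≤ -(κ + β) * δ j := by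
      nlinarith [(hδ j).1, (hδ j).2]
    have h2 : -(β * C) ≤ β / M * S := by
      have hβM : 0 ≤ β / M := by positivity
      have := mul_le_mul_of_nonneg_left hSlb hβM
      calc -(β * C) = β / M * (-(M * C)) := by field_simp
        _ ≤ β / M * S := this
    linarith
  have hE_ub : ∀ j, E j ≤ L := fun j =>
    mul_le_mul_of_nonneg_left (Real.exp_le_exp.2 (hexp_ub j)) hA.le
  have hE_lb : ∀ j, l ≤ E j := fun j =>
    mul_le_mul_of_nonneg_left (Real.exp_le_exp.2 (hexp_lb j)) hA.le
  have hE_pos : ∀ j, 0 < E j := fun j => lt_of_lt_of_le hlpos (hE_lb j)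
  -- first term
  have hterm1 : E i * (0 + ((M:ℝ) - 1) * (β / M)) ≤ β * L := by
    have hc0 : 0 ≤ ((M:ℝ) - 1) * (β / M) := by
      apply mul_nonneg; linarith; positivity
    have hcβ : ((M:ℝ) - 1) * (β / M) ≤ β := by
      rw [div_eq_mul_inv]
      have : ((M:ℝ) - 1) * (β * (M:ℝ)⁻¹) = β * (((M:ℝ)-1) / M) := by field_simp
      rw [this]
      nlinarith [div_le_one_of_le₀ (by linarith : (M:ℝ) - 1 ≤ M) hMpos.le]
    calc E i * (0 + ((M:ℝ) - 1) * (β / M)) = E i * (((M:ℝ) - 1) * (β / M)) := by ring_nf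
      _ ≤ L * β := mul_le_mul (hE_ub i) hcβ hc0 hLpos.le
      _ = β * L := by ring
  -- second part
  have hterm2 : (∑ j ∈ Finset.univ.erase i,
      E j * ((if j ∈ Finset.univ.erase i then -(κ + β) else 0) + ((M:ℝ) - 1) * (β / M)))
      ≤ ((M:ℝ) - 1) * (-(κ * l)) := by
    have hbound : ∀ j ∈ Finset.univ.erase i,
        E j * ((if j ∈ Finset.univ.erase i then -(κ + β) else 0) + ((M:ℝ) - 1) * (β / M))
        ≤ -(κ * l) := by
      intro j hj
      rw [if_pos hj]
      have hc : -(κ + β) + ((M:ℝ) - 1) * (β / M) ≤ -κ := by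
        have : ((M:ℝ) - 1) * (β / M) = β - β / M := by field_simp
        rw [this]
        have : 0 ≤ β / M := by positivity
        linarith
      calc E j * (-(κ + β) + ((M:ℝ) - 1) * (β / M)) ≤ E j * (-κ) :=
            mul_le_mul_of_nonneg_left hc (hE_pos j).le
        _ ≤ l * (-κ) := by
            have := hE_lb j
            nlinarith
        _ = -(κ * l) := by ring
    calc (∑ j ∈ Finset.univ.erase i, E j * ((if j ∈ Finset.univ.erase i then -(κ + β) else 0)
            + ((M:ℝ) - 1) * (β / M)))
        ≤ ∑ _j ∈ Finset.univ.erase i, -(κ * l) := Finset.sum_le_sum hbound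
      _ = ((M:ℝ) - 1) * (-(κ * l)) := by
          rw [Finset.sum_const, nsmul_eq_mul, hcardR]
  -- conclude
  have hMR : R < (M:ℝ) - 1 := by
    have h1 : R ≤ (⌈R⌉₊ : ℝ) := Nat.le_ceil R
    have h2 : ((⌈R⌉₊ + 2 : ℕ) : ℝ) ≤ M := by exact_mod_cast hM
    push_cast at h2
    linarith
  have hkey : β * L < ((M:ℝ) - 1) * (κ * l) := by
    have hRk : R * κ = β * Real.exp (2 * (κ + 2 * β) * C) := by
      rw [hR]; field_simp
    have hRkl : R * (κ * l) = β * L := by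
      calc R * (κ * l) = (R * κ) * l := by ring
        _ = β * Real.exp (2 * (κ + 2 * β) * C) * (A * Real.exp (-((κ + 2 * β) * C))) := by
            rw [hRk, hl]
        _ = β * A * (Real.exp (2 * (κ + 2 * β) * C) * Real.exp (-((κ + 2 * β) * C))) := by
            ring
        _ = β * A * Real.exp ((κ + 2 * β) * C) := by rw [← Real.exp_add]; ring_nf
        _ = β * L := by rw [hL]; ring
    calc β * L = R * (κ * l) := hRkl.symm
      _ < ((M:ℝ) - 1) * (κ * l) := by
          apply mul_lt_mul_of_pos_right hMR
          positivity
  linarith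
end

section
/- Let A > 0, κ ≥ 0, β ≥ 0 with κ + β > 0, and let d, B ∈ ℝ. Define f(x, y) = sup_{δ ≥ B} A·exp(−(κ+β)·δ + β·d)·(δ + x − y) for (x, y) ∈ ℝ². Then f is Lipschitz continuous on ℝ²: for all (x₁, y₁), (x₂, y₂) ∈ ℝ², |f(x₂, y₂) − f(x₁, y₁)| ≤ A·exp(−(κ+β)·B + β·d)·(|x₂ − x₁| + |y₂ − y₁|). -/
private lemma aux_texp (a t : ℝ) (ha : 0 < a) : t * Real.exp (-(a * t)) ≤ 1 / a := by
  rcases le_or_gt t 0 with ht | ht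
  · have h1 : t * Real.exp (-(a * t)) ≤ 0 :=
      mul_nonpos_of_nonpos_of_nonneg ht (Real.exp_pos _).le
    have h2 : (0:ℝ) ≤ 1 / a := by positivity
    linarith
  · have h := Real.add_one_le_exp (a * t)
    rw [Real.exp_neg, ← div_eq_mul_inv, div_le_div_iff₀ (Real.exp_pos _) ha]
    nlinarith

private lemma aux_bdd (A κ β d B x y : ℝ) (hA : 0 < A) (hκβ : 0 < κ + β) :
    BddAbove ((fun δ => A * Real.exp (-(κ + β) * δ + β * d) * (δ + x - y)) '' Set.Ici B) := by
  refine ⟨A * Real.exp (β * d) * Real.exp ((κ + β) * (x - y)) / (κ + β), ?_⟩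
  rintro z ⟨δ, hδ, rfl⟩
  have hEq : A * Real.exp (-(κ + β) * δ + β * d) * (δ + x - y)
      = (A * Real.exp (β * d) * Real.exp ((κ + β) * (x - y)))
        * ((δ + x - y) * Real.exp (-((κ + β) * (δ + x - y)))) := by
    have h : Real.exp (-(κ + β) * δ + β * d)
        = Real.exp (β * d) * Real.exp ((κ + β) * (x - y))
          * Real.exp (-((κ + β) * (δ + x - y))) := by
      rw [← Real.exp_add, ← Real.exp_add]; congr 1; ring
    rw [h]; ring
  have hC : (0:ℝ) ≤ A * Real.exp (β * d) * Real.exp ((κ + β) * (x - y)) := by positivity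
  have := mul_le_mul_of_nonneg_left (aux_texp (κ + β) (δ + x - y) hκβ) hC
  show A * Real.exp (-(κ + β) * δ + β * d) * (δ + x - y) ≤ _
  rw [hEq]
  calc (A * Real.exp (β * d) * Real.exp ((κ + β) * (x - y)))
        * ((δ + x - y) * Real.exp (-((κ + β) * (δ + x - y))))
      ≤ (A * Real.exp (β * d) * Real.exp ((κ + β) * (x - y))) * (1 / (κ + β)) := this
    _ = A * Real.exp (β * d) * Real.exp ((κ + β) * (x - y)) / (κ + β) := by ring

private lemma aux_key (A κ β d B : ℝ) (hA : 0 < A) (hκβ : 0 < κ + β)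
    (x₁ y₁ x₂ y₂ : ℝ) :
    sSup ((fun δ => A * Real.exp (-(κ + β) * δ + β * d) * (δ + x₂ - y₂)) '' Set.Ici B)
      ≤ sSup ((fun δ => A * Real.exp (-(κ + β) * δ + β * d) * (δ + x₁ - y₁)) '' Set.Ici B)
        + A * Real.exp (-(κ + β) * B + β * d) * (|x₂ - x₁| + |y₂ - y₁|) := by
  have hne : ((fun δ => A * Real.exp (-(κ + β) * δ + β * d) * (δ + x₂ - y₂)) '' Set.Ici B).Nonempty :=
    ⟨_, ⟨B, Set.self_mem_Ici, rfl⟩⟩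
  refine csSup_le hne ?_
  rintro z ⟨δ, hδ, rfl⟩
  have h1 : A * Real.exp (-(κ + β) * δ + β * d) * (δ + x₁ - y₁)
      ≤ sSup ((fun δ => A * Real.exp (-(κ + β) * δ + β * d) * (δ + x₁ - y₁)) '' Set.Ici B) :=
    le_csSup (aux_bdd A κ β d B x₁ y₁ hA hκβ) ⟨δ, hδ, rfl⟩
  have hexp : Real.exp (-(κ + β) * δ + β * d) ≤ Real.exp (-(κ + β) * B + β * d) := by
    apply Real.exp_le_exp.2
    have : (κ + β) * B ≤ (κ + β) * δ := mul_le_mul_of_nonneg_left hδ hκβ.le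
    linarith
  have habs : |(x₂ - x₁) - (y₂ - y₁)| ≤ |x₂ - x₁| + |y₂ - y₁| := abs_sub _ _
  have h2 : A * Real.exp (-(κ + β) * δ + β * d) * ((x₂ - x₁) - (y₂ - y₁))
      ≤ A * Real.exp (-(κ + β) * B + β * d) * (|x₂ - x₁| + |y₂ - y₁|) := by
    calc A * Real.exp (-(κ + β) * δ + β * d) * ((x₂ - x₁) - (y₂ - y₁))
        ≤ A * Real.exp (-(κ + β) * δ + β * d) * |(x₂ - x₁) - (y₂ - y₁)| := by
          apply mul_le_mul_of_nonneg_left (le_abs_self _) (by positivity)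
      _ ≤ A * Real.exp (-(κ + β) * B + β * d) * (|x₂ - x₁| + |y₂ - y₁|) := by
          apply mul_le_mul (by nlinarith [abs_nonneg ((x₂ - x₁) - (y₂ - y₁))]) habs
            (abs_nonneg _) (by positivity)
  have hsplit : A * Real.exp (-(κ + β) * δ + β * d) * (δ + x₂ - y₂)
      = A * Real.exp (-(κ + β) * δ + β * d) * (δ + x₁ - y₁)
        + A * Real.exp (-(κ + β) * δ + β * d) * ((x₂ - x₁) - (y₂ - y₁)) := by ring
  show A * Real.exp (-(κ + β) * δ + β * d) * (δ + x₂ - y₂) ≤ _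
  linarith

/-- The Hamiltonian `f(x,y) = sup_{δ ≥ B} A·exp(−(κ+β)·δ + β·d)·(δ + x − y)`
of the mean-field HJB system is Lipschitz continuous on `ℝ²`:
`|f(x₂,y₂) − f(x₁,y₁)| ≤ A·exp(−(κ+β)·B + β·d)·(|x₂−x₁| + |y₂−y₁|)`. -/
theorem hamiltonian_lipschitz
    (A κ β d B : ℝ) (hA : 0 < A) (hκ : 0 ≤ κ) (hβ : 0 ≤ β) (hκβ : 0 < κ + β)
    (f : ℝ → ℝ → ℝ)
    (hf : ∀ x y : ℝ, f x y =
      sSup ((fun δ => A * Real.exp (-(κ + β) * δ + β * d) * (δ + x - y)) '' Set.Ici B)) :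
    ∀ x₁ y₁ x₂ y₂ : ℝ,
      |f x₂ y₂ - f x₁ y₁| ≤
        A * Real.exp (-(κ + β) * B + β * d) * (|x₂ - x₁| + |y₂ - y₁|) := by
  intro x₁ y₁ x₂ y₂
  have h1 := aux_key A κ β d B hA hκβ x₁ y₁ x₂ y₂
  have h2 := aux_key A κ β d B hA hκβ x₂ y₂ x₁ y₁
  rw [hf x₁ y₁, hf x₂ y₂]
  rw [abs_sub_comm x₁ x₂, abs_sub_comm y₁ y₂] at h2
  rw [abs_le]
  constructor <;> linarith
end

section
/- Let T > 0, A > 0, κ ≥ 0, β ≥ 0 with κ + β > 0, B ∈ ℝ, α > 0, φ > 0, let Q̄ ≥ 1 be an integer, and let δ̄ : [0, T] → ℝ be continuous. Then there exists a unique continuously differentiable function h = (h₀, h₁, …, h_{Q̄}) : [0, T] → ℝ^{Q̄+1} satisfying, for all t ∈ [0, T]: h₀'(t) = 0 with h₀(T) = 0, and for each q ∈ {1, …, Q̄}, h_q'(t) = φ·q² − sup_{δ ≥ B} A·exp(−(κ+β)·δ + β·δ̄(t))·(δ + h_{q−1}(t) − h_q(t)) with terminal condition h_q(T) = −α·q².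 -/
/-!
The supremum in the equation for `h_q` is attained at `δ* = max B (1/(κ+β) - c)` with
`c = h_{q-1} - h_q`, so it has a closed form which, as a function of `c`, is Lipschitz with
constant `A·exp(β δ̄(t) - (κ+β) B)`, uniformly bounded on `[0, T]`. The system is triangular:
once `h_{q-1}` is known, `h_q` solves a scalar ODE whose right-hand side is continuous in `t`
and globally Lipschitz in `h_q`. Such an ODE has a solution on all of `[0, T]` with prescribed
value at `T` (Picard–Lindelöf for the field frozen outside the Grönwall a priori bound, run
backwards in time), and Grönwall gives uniqueness. Induction on `q` concludes.
-/

/-- `h : ℝ → ℕ → ℝ` solves the mean-field HJB ODE system of Proposition 2 on `[0,T]`: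
`h₀' = 0` with `h₀(T) = 0`, and for `1 ≤ q ≤ Q̄`,
`h_q'(t) = φ·q² − sup_{δ ≥ B} A·exp(−(κ+β)·δ + β·δ̄(t))·(δ + h_{q−1}(t) − h_q(t))`
with `h_q(T) = −α·q²`. -/
def IsMFHJBSolution (T A κ β B α φ : ℝ) (Qbar : ℕ) (δbar : ℝ → ℝ) (h : ℝ → ℕ → ℝ) : Prop :=
  (∀ t ∈ Set.Icc (0 : ℝ) T, HasDerivWithinAt (fun s => h s 0) 0 (Set.Icc 0 T) t) ∧
  h T 0 = 0 ∧
  ∀ q : ℕ, 1 ≤ q → q ≤ Qbar →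
    (∀ t ∈ Set.Icc (0 : ℝ) T,
      HasDerivWithinAt (fun s => h s q)
        (φ * (q : ℝ) ^ 2 -
          sSup ((fun δ => A * Real.exp (-(κ + β) * δ + β * δbar t) *
            (δ + h t (q - 1) - h t q)) '' Set.Ici B))
        (Set.Icc 0 T) t) ∧
    h T q = -α * (q : ℝ) ^ 2

open Set Real

open scoped NNReal

-- The critical point `γ⁻¹ - c` of `δ ↦ exp (-γ δ) (δ + c)`, moved into the admissible set `δ ≥ B`.
noncomputable def optimalQuote (γ B c : ℝ) : ℝ := max B (γ⁻¹ - c)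

noncomputable def hamiltonian (γ B c : ℝ) : ℝ :=
  exp (-γ * optimalQuote γ B c) * (optimalQuote γ B c + c)

section Hamiltonian

variable {γ B : ℝ}

-- The sign hypothesis holds when `D` is the critical point (`γ (D + c) = 1`), or when the critical
-- point lies left of `D ≤ δ`; then `1 + x ≤ exp x` at `x = γ (δ - D)` does the rest.
theorem exp_neg_mul_mul_add_le {c D δ : ℝ} (hD : 0 ≤ D + c)
    (hδ : 0 ≤ (δ - D) * (γ * (D + c) - 1)) :
    exp (-γ * δ) * (δ + c) ≤ exp (-γ * D) * (D + c) := by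
  have hlin : δ + c ≤ (D + c) * (1 + γ * (δ - D)) := by nlinarith
  have hexp : (D + c) * (1 + γ * (δ - D)) ≤ (D + c) * exp (γ * (δ - D)) := by
    gcongr
    linarith [add_one_le_exp (γ * (δ - D))]
  calc exp (-γ * δ) * (δ + c) ≤ exp (-γ * δ) * ((D + c) * exp (γ * (δ - D))) := by
        gcongr; linarith
    _ = exp (-γ * D) * (D + c) := by
        rw [mul_left_comm, ← exp_add]; ring_nf

theorem le_optimalQuote (γ B c : ℝ) : B ≤ optimalQuote γ B c := le_max_left _ _

theorem exp_neg_mul_mul_add_le_hamiltonian (hγ : 0 < γ) {c δ : ℝ} (hδ : B ≤ δ) :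
    exp (-γ * δ) * (δ + c) ≤ hamiltonian γ B c := by
  have hD : γ⁻¹ - c ≤ optimalQuote γ B c := le_max_right _ _
  have hγD : 1 ≤ γ * (optimalQuote γ B c + c) := by
    rw [← mul_inv_cancel₀ hγ.ne']; gcongr; linarith
  apply exp_neg_mul_mul_add_le (by linarith [inv_pos.2 hγ])
  rcases max_cases B (γ⁻¹ - c) with ⟨hB, -⟩ | ⟨hc, -⟩
  · have : B = optimalQuote γ B c := hB.symm
    apply mul_nonneg <;> linarith
  · have : γ * (optimalQuote γ B c + c) = 1 := by
      rw [optimalQuote, hc, sub_add_cancel, mul_inv_cancel₀ hγ.ne']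
    rw [this, sub_self, mul_zero]

theorem hamiltonian_le_add_mul_abs_sub (hγ : 0 < γ) (c₁ c₂ : ℝ) :
    hamiltonian γ B c₁ ≤ hamiltonian γ B c₂ + exp (-γ * B) * |c₁ - c₂| := by
  set D := optimalQuote γ B c₁
  have hD := exp_neg_mul_mul_add_le_hamiltonian hγ (c := c₂) (le_optimalQuote γ B c₁)
  have hexp : exp (-γ * D) ≤ exp (-γ * B) :=
    exp_le_exp.2 (by nlinarith [le_optimalQuote γ B c₁])
  have hdiff : exp (-γ * D) * (c₁ - c₂) ≤ exp (-γ * B) * |c₁ - c₂| :=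
    calc exp (-γ * D) * (c₁ - c₂) ≤ exp (-γ * D) * |c₁ - c₂| := by
          gcongr; exact le_abs_self _
      _ ≤ exp (-γ * B) * |c₁ - c₂| := by gcongr
  calc hamiltonian γ B c₁ = exp (-γ * D) * (D + c₂) + exp (-γ * D) * (c₁ - c₂) := by
        rw [hamiltonian]; ring
    _ ≤ hamiltonian γ B c₂ + exp (-γ * B) * |c₁ - c₂| := add_le_add hD hdiff

theorem lipschitzWith_hamiltonian (hγ : 0 < γ) :
    LipschitzWith (exp (-γ * B)).toNNReal (hamiltonian γ B) :=
  LipschitzWith.of_le_add_mul _ fun c₁ c₂ => by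
    rw [coe_toNNReal _ (exp_pos _).le, dist_eq]
    exact hamiltonian_le_add_mul_abs_sub hγ c₁ c₂

theorem sSup_image_Ici_eq_hamiltonian {A : ℝ} (hA : 0 ≤ A) (hγ : 0 < γ) (d c : ℝ) :
    sSup ((fun δ => A * exp (-γ * δ + d) * (δ + c)) '' Ici B) =
      A * exp d * hamiltonian γ B c := by
  have hform : (fun δ => A * exp (-γ * δ + d) * (δ + c)) =
      fun δ => A * exp d * (exp (-γ * δ) * (δ + c)) := by
    ext δ; rw [exp_add]; ring
  rw [hform]
  refine IsGreatest.csSup_eq ⟨⟨optimalQuote γ B c, le_optimalQuote γ B c, rfl⟩, ?_⟩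
  rintro _ ⟨δ, hδ, rfl⟩
  exact mul_le_mul_of_nonneg_left (exp_neg_mul_mul_add_le_hamiltonian hγ hδ) (by positivity)

end Hamiltonian

section ODE

variable {E : Type*} [NormedAddCommGroup E] [NormedSpace ℝ E] {a b : ℝ} {K : ℝ≥0}

theorem eqOn_Icc_of_hasDerivWithinAt_of_eq_right {F : ℝ → E → E} {f g : ℝ → E}
    (hF : ∀ t ∈ Icc a b, LipschitzWith K (F t))
    (hf : ∀ t ∈ Icc a b, HasDerivWithinAt f (F t (f t)) (Icc a b) t)
    (hg : ∀ t ∈ Icc a b, HasDerivWithinAt g (F t (g t)) (Icc a b) t)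
    (hb : f b = g b) : EqOn f g (Icc a b) :=
  ODE_solution_unique_of_mem_Icc_left (s := fun _ => univ)
    (fun t ht => (hF t (Ioc_subset_Icc_self ht)).lipschitzOnWith)
    (fun t ht => (hf t ht).continuousWithinAt)
    (fun t ht => (hf t (Ioc_subset_Icc_self ht)).mono_of_mem_nhdsWithin
      (Icc_mem_nhdsLE_of_mem ht))
    (fun _ _ => mem_univ _)
    (fun t ht => (hg t ht).continuousWithinAt)
    (fun t ht => (hg t (Ioc_subset_Icc_self ht)).mono_of_mem_nhdsWithin
      (Icc_mem_nhdsLE_of_mem ht))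
    (fun _ _ => mem_univ _) hb

theorem dist_le_gronwallBound_of_hasDerivWithinAt {F : ℝ → E → E} {f : ℝ → E} {x₀ : E} {C : ℝ}
    (hF : ∀ t ∈ Icc a b, LipschitzWith K (F t)) (hC : ∀ t ∈ Icc a b, ‖F t x₀‖ ≤ C)
    (hf : ∀ t ∈ Icc a b, HasDerivWithinAt f (F t (f t)) (Icc a b) t) (hfa : f a = x₀) :
    ∀ t ∈ Icc a b, dist (f t) x₀ ≤ gronwallBound 0 K C (t - a) := by
  intro t ht
  simpa only [zero_add] using dist_le_of_approx_trajectories_ODE_of_mem (v := F)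
    (s := fun _ => univ) (g := fun _ => x₀) (g' := fun _ => 0) (εf := 0)
    (fun t ht => (hF t (Ico_subset_Icc_self ht)).lipschitzOnWith)
    (fun t ht => (hf t ht).continuousWithinAt)
    (fun t ht => (hf t (Ico_subset_Icc_self ht)).mono_of_mem_nhdsWithin
      (Icc_mem_nhdsGE_of_mem ht))
    (fun t _ => by rw [dist_self]) (fun _ _ => mem_univ _) continuousOn_const
    (fun t _ => hasDerivWithinAt_const _ _ _)
    (fun t ht => by simpa using hC t (Ico_subset_Icc_self ht))
    (fun _ _ => mem_univ _) (dist_le_zero.2 hfa) t ht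

theorem exists_hasDerivWithinAt_Icc_of_norm_le [CompleteSpace E] {G : ℝ → E → E} {C : ℝ}
    (hab : a ≤ b) (hG : ∀ t ∈ Icc a b, LipschitzWith K (G t))
    (hcont : ∀ x, ContinuousOn (G · x) (Icc a b)) (hC : ∀ t ∈ Icc a b, ∀ x, ‖G t x‖ ≤ C)
    (x₀ : E) :
    ∃ f : ℝ → E, f a = x₀ ∧ ∀ t ∈ Icc a b, HasDerivWithinAt f (G t (f t)) (Icc a b) t := by
  have hC_nonneg : 0 ≤ C := (norm_nonneg _).trans (hC a (left_mem_Icc.2 hab) x₀)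
  have hpl : IsPicardLindelof G (tmin := a) (tmax := b) ⟨a, left_mem_Icc.2 hab⟩ x₀
      ⟨C * (b - a), mul_nonneg hC_nonneg (sub_nonneg.2 hab)⟩ 0 ⟨C, hC_nonneg⟩ K :=
    { lipschitzOnWith := fun t ht => (hG t ht).lipschitzOnWith
      continuousOn := fun x _ => hcont x
      norm_le := fun t ht x _ => hC t ht x
      mul_max_le := by
        show C * max (b - a) (a - a) ≤ C * (b - a) - 0
        rw [sub_self, max_eq_left (sub_nonneg.2 hab), sub_zero] }
  exact hpl.exists_eq_forall_mem_Icc_hasDerivWithinAt₀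

theorem exists_hasDerivWithinAt_Icc_of_lipschitzWith {F : ℝ → ℝ → ℝ}
    (hF : ∀ t ∈ Icc a b, LipschitzWith K (F t))
    (hcont : ∀ x, ContinuousOn (F · x) (Icc a b)) (x₀ : ℝ) :
    ∃ f : ℝ → ℝ, f a = x₀ ∧ ∀ t ∈ Icc a b, HasDerivWithinAt f (F t (f t)) (Icc a b) t := by
  rcases lt_or_ge b a with hba | hab
  · exact ⟨fun _ => x₀, rfl, fun t ht => absurd (ht.1.trans ht.2) hba.not_ge⟩
  obtain ⟨C₀, hC₀⟩ := isCompact_Icc.exists_bound_of_continuousOn (hcont x₀)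
  have hC₀_nonneg : 0 ≤ C₀ := (norm_nonneg _).trans (hC₀ a (left_mem_Icc.2 hab))
  set R := gronwallBound 0 K C₀ (b - a)
  have hR_mono : ∀ t ∈ Icc a b, gronwallBound 0 K C₀ (t - a) ≤ R := fun t ht =>
    gronwallBound_mono le_rfl hC₀_nonneg K.coe_nonneg (by linarith [ht.2])
  have hR : 0 ≤ R := by
    simpa only [sub_self, gronwallBound_x0] using hR_mono a (left_mem_Icc.2 hab)
  -- Freeze the field outside the ball of radius `R`, which Grönwall shows the solution never leaves.
  set clamp : ℝ → ℝ := fun x => projIcc (x₀ - R) (x₀ + R) (by linarith) x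
  have hclamp : LipschitzWith 1 clamp :=
    ((LipschitzWith.subtype_val _).comp (LipschitzWith.projIcc _)).weaken (mul_one 1).le
  have hclamp_mem : ∀ x, dist (clamp x) x₀ ≤ R := fun x => by
    have hx : clamp x ∈ Icc (x₀ - R) (x₀ + R) := Subtype.prop _
    rw [dist_eq, abs_le]; constructor <;> linarith [hx.1, hx.2]
  have hclamp_of_dist_le : ∀ x, dist x x₀ ≤ R → clamp x = x := fun x hx => by
    rw [dist_eq, abs_le] at hx
    simp only [clamp, projIcc_of_mem _ (⟨by linarith, by linarith⟩ : x ∈ Icc (x₀ - R) (x₀ + R))]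
  set G : ℝ → ℝ → ℝ := fun t x => F t (clamp x)
  have hG : ∀ t ∈ Icc a b, LipschitzWith K (G t) := fun t ht =>
    ((hF t ht).comp hclamp).weaken (mul_one K).le
  have hG_bound : ∀ t ∈ Icc a b, ∀ x, ‖G t x‖ ≤ C₀ + K * R := fun t ht x =>
    calc ‖G t x‖ ≤ ‖F t x₀‖ + dist (F t (clamp x)) (F t x₀) := by
          rw [dist_eq_norm]; exact norm_le_insert' _ _
      _ ≤ C₀ + K * R := add_le_add (hC₀ t ht) <|
          ((hF t ht).dist_le_mul _ _).trans (by gcongr; exact hclamp_mem x)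
  obtain ⟨f, hfa, hf⟩ :=
    exists_hasDerivWithinAt_Icc_of_norm_le hab hG (fun x => hcont (clamp x)) hG_bound x₀
  have hGx₀ : ∀ t ∈ Icc a b, ‖G t x₀‖ ≤ C₀ := fun t ht => by
    simpa only [G, hclamp_of_dist_le x₀ (by simpa using hR)] using hC₀ t ht
  have hf_dist : ∀ t ∈ Icc a b, dist (f t) x₀ ≤ R := fun t ht =>
    (dist_le_gronwallBound_of_hasDerivWithinAt hG hGx₀ hf hfa t ht).trans (hR_mono t ht)
  exact ⟨f, hfa, fun t ht => by simpa only [G, hclamp_of_dist_le _ (hf_dist t ht)] using hf t ht⟩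

theorem exists_hasDerivWithinAt_Icc_of_lipschitzWith_right {F : ℝ → ℝ → ℝ}
    (hF : ∀ t ∈ Icc a b, LipschitzWith K (F t))
    (hcont : ∀ x, ContinuousOn (F · x) (Icc a b)) (x₀ : ℝ) :
    ∃ f : ℝ → ℝ, f b = x₀ ∧ ∀ t ∈ Icc a b, HasDerivWithinAt f (F t (f t)) (Icc a b) t := by
  have hneg : MapsTo Neg.neg (Icc a b) (Icc (-b) (-a)) := fun t ht =>
    ⟨neg_le_neg ht.2, neg_le_neg ht.1⟩
  have hneg' : MapsTo Neg.neg (Icc (-b) (-a)) (Icc a b) := fun s hs =>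
    ⟨le_neg_of_le_neg hs.2, neg_le_of_neg_le hs.1⟩
  obtain ⟨g, hgb, hg⟩ := exists_hasDerivWithinAt_Icc_of_lipschitzWith (a := -b) (b := -a)
    (F := fun s x => -F (-s) x) (fun s hs => (hF (-s) (hneg' hs)).neg)
    (fun x => ((hcont x).comp continuousOn_neg hneg').neg) x₀
  refine ⟨fun t => g (-t), hgb, fun t ht => ?_⟩
  have h := (hg (-t) (hneg ht)).comp t (hasDerivAt_neg t).hasDerivWithinAt hneg
  rwa [neg_neg, neg_mul_neg, mul_one] at h

end ODE

noncomputable def hjbDrift (A κ β B φ : ℝ) (δbar : ℝ → ℝ) (q : ℕ) (t y x : ℝ) : ℝ :=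
  φ * (q : ℝ) ^ 2 - A * exp (β * δbar t) * hamiltonian (κ + β) B (y - x)

section HJB

variable {T A κ β B α φ : ℝ} {Qbar : ℕ} {δbar : ℝ → ℝ}

theorem isMFHJBSolution_iff (hA : 0 ≤ A) (hγ : 0 < κ + β) {h : ℝ → ℕ → ℝ} :
    IsMFHJBSolution T A κ β B α φ Qbar δbar h ↔
      (∀ t ∈ Icc 0 T, HasDerivWithinAt (fun s => h s 0) 0 (Icc 0 T) t) ∧ h T 0 = 0 ∧
      ∀ q : ℕ, 1 ≤ q → q ≤ Qbar →
        (∀ t ∈ Icc 0 T, HasDerivWithinAt (fun s => h s q)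
          (hjbDrift A κ β B φ δbar q t (h t (q - 1)) (h t q)) (Icc 0 T) t) ∧
        h T q = -α * (q : ℝ) ^ 2 := by
  simp only [IsMFHJBSolution, hjbDrift, add_sub_assoc, sSup_image_Ici_eq_hamiltonian hA hγ]

theorem exists_lipschitzWith_hjbDrift {s : Set ℝ} (hs : IsCompact s) (hγ : 0 < κ + β)
    (hδbar : ContinuousOn δbar s) :
    ∃ K : ℝ≥0, ∀ t ∈ s, ∀ (q : ℕ) (y : ℝ), LipschitzWith K (hjbDrift A κ β B φ δbar q t y) := by
  obtain ⟨M, hM⟩ := hs.exists_bound_of_continuousOn (f := fun t => A * exp (β * δbar t))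
    (by fun_prop)
  refine ⟨M.toNNReal * (exp (-(κ + β) * B)).toNNReal, fun t ht q y => ?_⟩
  refine LipschitzWith.of_dist_le_mul fun x x' => ?_
  have hV := (lipschitzWith_hamiltonian hγ (B := B)).dist_le_mul (y - x) (y - x')
  rw [dist_sub_left] at hV
  calc dist (hjbDrift A κ β B φ δbar q t y x) (hjbDrift A κ β B φ δbar q t y x')
      = ‖A * exp (β * δbar t)‖ * dist (hamiltonian (κ + β) B (y - x))
          (hamiltonian (κ + β) B (y - x')) := by
        simp only [hjbDrift, dist_eq, Real.norm_eq_abs]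
        rw [sub_sub_sub_cancel_left, ← mul_sub, abs_mul, abs_sub_comm]
    _ ≤ M.toNNReal * ((exp (-(κ + β) * B)).toNNReal * dist x x') :=
        mul_le_mul ((hM t ht).trans (le_coe_toNNReal M)) hV dist_nonneg (by positivity)
    _ = _ := by push_cast; ring

theorem continuousOn_hjbDrift {s : Set ℝ} (hγ : 0 < κ + β) (hδbar : ContinuousOn δbar s)
    {p : ℝ → ℝ} (hp : ContinuousOn p s) (q : ℕ) (x : ℝ) :
    ContinuousOn (fun t => hjbDrift A κ β B φ δbar q t (p t) x) s := by
  have := (lipschitzWith_hamiltonian hγ (B := B)).continuous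
  unfold hjbDrift
  fun_prop

theorem exists_isMFHJBSolution (hA : 0 ≤ A) (hγ : 0 < κ + β)
    (hδbar : ContinuousOn δbar (Icc 0 T)) :
    ∃ h : ℝ → ℕ → ℝ, IsMFHJBSolution T A κ β B α φ Qbar δbar h := by
  obtain ⟨K, hK⟩ :=
    exists_lipschitzWith_hjbDrift (A := A) (B := B) (φ := φ) isCompact_Icc hγ hδbar
  -- The hypothesis on `p` sits inside the `∃` so that `choose` gives a solution map on all `p`.
  have hstep : ∀ (p : ℝ → ℝ) (q : ℕ), ∃ f : ℝ → ℝ, ContinuousOn p (Icc 0 T) →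
      f T = -α * (q : ℝ) ^ 2 ∧ ∀ t ∈ Icc 0 T,
        HasDerivWithinAt f (hjbDrift A κ β B φ δbar q t (p t) (f t)) (Icc 0 T) t := by
    intro p q
    by_cases hp : ContinuousOn p (Icc 0 T)
    · exact (exists_hasDerivWithinAt_Icc_of_lipschitzWith_right (fun t ht => hK t ht q (p t))
        (continuousOn_hjbDrift hγ hδbar hp q) _).imp fun f hf _ => hf
    · exact ⟨0, fun hp' => (hp hp').elim⟩
  choose sol hsol using hstep
  let h : ℕ → ℝ → ℝ := fun q => Nat.rec (fun _ => 0) (fun q hq => sol hq (q + 1)) q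
  have hcont : ∀ q, ContinuousOn (h q) (Icc 0 T) := by
    intro q
    induction q with
    | zero => exact continuousOn_const
    | succ q ih => exact fun t ht => ((hsol (h q) (q + 1) ih).2 t ht).continuousWithinAt
  refine ⟨fun t q => h q t, (isMFHJBSolution_iff (h := fun t q => h q t) hA hγ).2
    ⟨fun t _ => hasDerivWithinAt_const _ _ _, rfl, fun q hq _ => ?_⟩⟩
  obtain ⟨q, rfl⟩ := Nat.exists_eq_add_of_le' hq
  exact (hsol (h q) (q + 1) (hcont q)).symm

theorem IsMFHJBSolution.eqOn (hA : 0 ≤ A) (hγ : 0 < κ + β)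
    (hδbar : ContinuousOn δbar (Icc 0 T)) {h₁ h₂ : ℝ → ℕ → ℝ}
    (H₁ : IsMFHJBSolution T A κ β B α φ Qbar δbar h₁)
    (H₂ : IsMFHJBSolution T A κ β B α φ Qbar δbar h₂) :
    ∀ q ≤ Qbar, EqOn (fun t => h₁ t q) (fun t => h₂ t q) (Icc 0 T) := by
  rw [isMFHJBSolution_iff hA hγ] at H₁ H₂
  obtain ⟨K, hK⟩ :=
    exists_lipschitzWith_hjbDrift (A := A) (B := B) (φ := φ) isCompact_Icc hγ hδbar
  intro q
  induction q with
  | zero =>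
    exact fun _ => eqOn_Icc_of_hasDerivWithinAt_of_eq_right (F := fun _ _ => (0 : ℝ)) (K := 0)
      (fun _ _ => LipschitzWith.const 0) H₁.1 H₂.1 (H₁.2.1.trans H₂.2.1.symm)
  | succ q ih =>
    intro hq
    obtain ⟨hd₁, hT₁⟩ := H₁.2.2 (q + 1) le_add_self hq
    obtain ⟨hd₂, hT₂⟩ := H₂.2.2 (q + 1) le_add_self hq
    refine eqOn_Icc_of_hasDerivWithinAt_of_eq_right (fun t ht => hK t ht (q + 1) (h₁ t q)) hd₁
      (fun t ht => ?_) (hT₁.trans hT₂.symm)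
    have hprev : h₂ t q = h₁ t q := (ih (Nat.le_of_succ_le hq) ht).symm
    simpa only [Nat.add_sub_cancel, hprev] using hd₂ t ht

end HJB

theorem meanField_HJB_existence_uniqueness_general
    (T A κ β B α φ : ℝ) (Qbar : ℕ)
    (hA : 0 < A) (hκβ : 0 < κ + β)
    (δbar : ℝ → ℝ) (hδbar : ContinuousOn δbar (Set.Icc 0 T)) :
    (∃ h : ℝ → ℕ → ℝ, IsMFHJBSolution T A κ β B α φ Qbar δbar h) ∧
    ∀ h₁ h₂ : ℝ → ℕ → ℝ,
      IsMFHJBSolution T A κ β B α φ Qbar δbar h₁ →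
      IsMFHJBSolution T A κ β B α φ Qbar δbar h₂ →
      ∀ t ∈ Set.Icc (0 : ℝ) T, ∀ q ≤ Qbar, h₁ t q = h₂ t q :=
  ⟨exists_isMFHJBSolution hA.le hκβ hδbar, fun _ _ H₁ H₂ _ ht q hq =>
    H₁.eqOn hA.le hκβ hδbar H₂ q hq ht⟩

/-- Existence and uniqueness for the mean-field HJB ODE system
(Proposition 2): given a continuous mean quote `δ̄`, there is a unique continuously
differentiable solution `h = (h₀, …, h_{Q̄})` on `[0, T]`. -/
theorem meanField_HJB_existence_uniqueness
    (T A κ β B α φ : ℝ) (Qbar : ℕ)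
    (hT : 0 < T) (hA : 0 < A) (hκ : 0 ≤ κ) (hβ : 0 ≤ β) (hκβ : 0 < κ + β)
    (hα : 0 < α) (hφ : 0 < φ) (hQ : 1 ≤ Qbar)
    (δbar : ℝ → ℝ) (hδbar : ContinuousOn δbar (Set.Icc 0 T)) :
    (∃ h : ℝ → ℕ → ℝ, IsMFHJBSolution T A κ β B α φ Qbar δbar h) ∧
    ∀ h₁ h₂ : ℝ → ℕ → ℝ,
      IsMFHJBSolution T A κ β B α φ Qbar δbar h₁ →
      IsMFHJBSolution T A κ β B α φ Qbar δbar h₂ →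
      ∀ t ∈ Set.Icc (0 : ℝ) T, ∀ q ≤ Qbar, h₁ t q = h₂ t q :=
  meanField_HJB_existence_uniqueness_general T A κ β B α φ Qbar hA hκβ δbar hδbar
end
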